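/- In ℤ[[q]], the generating function of A(n) equals the ratio of theta series φ(-q)/ψ(-q); that is, ∏_{k=1}^∞ (1 - q^{2k-1})(1 - q^{4k-2}) = (Σ_{n∈ℤ} (-1)^n q^{n^2}) / (Σ_{n=0}^∞ (-1)^{n(n+1)/2} q^{n(n+1)/2}). -/

import Mathlib

open PowerSeries

noncomputable instance : TopologicalSpace (PowerSeries ℤ) :=
  inferInstanceAs (TopologicalSpace ((Unit →₀ ℕ) → ℤ))

/-- `φ(-q) = ∑_{n ∈ ℤ} (-1)^n q^{n^2}`. -/
noncomputable def phiNeg : ℤ⟦X⟧ :=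
  ∑' n : ℤ, C (R := ℤ) (((-1 : ℤˣ) ^ n : ℤˣ) : ℤ) * (X : ℤ⟦X⟧) ^ (n ^ 2).toNat

/-- `ψ(-q) = ∑_{n=0}^∞ (-1)^{n(n+1)/2} q^{n(n+1)/2}`. -/
noncomputable def psiNeg : ℤ⟦X⟧ :=
  ∑' n : ℕ, (-1 : ℤ⟦X⟧) ^ (n * (n + 1) / 2) * (X : ℤ⟦X⟧) ^ (n * (n + 1) / 2)

instance : T2Space (PowerSeries ℤ) :=
  inferInstanceAs (T2Space ((Unit →₀ ℕ) → ℤ))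

open Finset

namespace JTP

/-- Gaussian binomial with base `X^r`, via the q-Pascal recurrence. -/
noncomputable def gb (r : ℕ) : ℕ → ℕ → ℤ⟦X⟧
  | 0, 0 => 1
  | 0, _+1 => 0
  | _+1, 0 => 1
  | n+1, k+1 => gb r n (k+1) + X ^ (r * (n - k)) * gb r n k

@[simp] lemma gb_zero_right (r n : ℕ) : gb r n 0 = 1 := by cases n <;> rfl

lemma gb_eq_zero {r n k : ℕ} (h : n < k) : gb r n k = 0 := by
  induction n generalizing k with
  | zero => cases k with
    | zero => omega
    | succ k => rfl
  | succ n ih =>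
    cases k with
    | zero => omega
    | succ k =>
      show gb r n (k+1) + X ^ (r * (n - k)) * gb r n k = 0
      rw [ih (by omega), ih (by omega), mul_zero, add_zero]

@[simp] lemma gb_self (r n : ℕ) : gb r n n = 1 := by
  induction n with
  | zero => rfl
  | succ n ih =>
    show gb r n (n+1) + X ^ (r * (n - n)) * gb r n n = 1
    rw [gb_eq_zero (by omega), ih, Nat.sub_self, mul_zero, pow_zero, zero_add, one_mul]

lemma gb_pascal1 (r n k : ℕ) :
    gb r (n+1) (k+1) = gb r n (k+1) + X ^ (r * (n - k)) * gb r n k := rfl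




/-- The second q-Pascal recurrence. -/
lemma gb_pascal2 (r : ℕ) : ∀ n k : ℕ, gb r (n+1) (k+1) = gb r n k + X ^ (r * (k+1)) * gb r n (k+1) := by
  intro n
  induction n with
  | zero =>
    intro k
    cases k with
    | zero => simp [gb_pascal1, gb_eq_zero (show 0 < 1 by omega)]
    | succ k =>
      rw [gb_pascal1 r 0 (k+1), gb_eq_zero (show 0 < k+2 by omega),
        gb_eq_zero (show 0 < k+1 by omega)]
      ring
  | succ n ih =>
    intro k
    cases k with
    | zero =>
      have h1 := gb_pascal1 r (n+1) 0
      have h3 := ih 0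
      have h4 := gb_pascal1 r n 0
      simp only [gb_zero_right, mul_one, Nat.sub_zero] at h1 h3 h4 ⊢
      have hE : (X : ℤ⟦X⟧) ^ (r*(n+1)) = X ^ (r*(0+1)) * X ^ (r*n) := by
        rw [← pow_add]; congr 1; ring
      linear_combination h1 + h3 - X^(r*(0+1)) * h4 + hE
    | succ k =>
      rcases le_or_gt (k+1) n with hk | hk
      · have h1 := gb_pascal1 r (n+1) (k+1)
        have h2 := ih (k+1)
        have h3 := ih k
        have h4 := gb_pascal1 r n k
        have h5 := gb_pascal1 r n (k+1)
        have h6 : n + 1 - (k+1) = n - k := by omega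
        rw [h6] at h1
        have hE : (X : ℤ⟦X⟧) ^ (r*(n-k)) * X ^ (r*(k+1))
            = X ^ (r*(k+1+1)) * X ^ (r*(n-(k+1))) := by
          rw [← pow_add, ← pow_add]
          congr 1
          have : n - k = (n - (k+1)) + 1 := by omega
          rw [this]; ring
        linear_combination h1 + X^(r*(n-k)) * h3 - h4 + h2
          - X^(r*(k+1+1)) * h5 + gb r n (k+1) * hE
      · rcases eq_or_lt_of_le (show n ≤ k by omega) with rfl | hlt
        · rw [gb_pascal1 r (n+1) (n+1), gb_eq_zero (show n+1 < n+1+1 by omega)]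
          simp
        · rw [gb_pascal1 r (n+1) (k+1), gb_eq_zero (show n+1 < k+1+1 by omega),
            gb_eq_zero (show n+1 < k+1 by omega)]
          ring


/-- `∏_{j<n} (1 - X^(a + r j))`. -/
noncomputable def op (a r n : ℕ) : ℤ⟦X⟧ := ∏ j ∈ range n, (1 - X ^ (a + r * j))

@[simp] lemma op_zero (a r : ℕ) : op a r 0 = 1 := by simp [op]

lemma op_succ (a r n : ℕ) : op a r (n+1) = op a r n * (1 - X ^ (a + r * n)) := by
  simp [op, prod_range_succ]

@[simp] lemma constantCoeff_op (a r n : ℕ) (ha : 0 < a) :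
    constantCoeff (R := ℤ) (op a r n) = 1 := by
  rw [op, map_prod]
  rw [Finset.prod_eq_one]
  intro j _
  rw [map_sub, map_one, map_pow, constantCoeff_X, zero_pow (by omega), sub_zero]

lemma isUnit_op (a r n : ℕ) (ha : 0 < a) : IsUnit (op a r n) :=
  isUnit_iff_constantCoeff.2 (by rw [constantCoeff_op a r n ha]; exact isUnit_one)

lemma dvd_prod_sub_one {ι : Type*} {s : Finset ι} {f : ι → ℤ⟦X⟧} {M : ℕ}
    (h : ∀ i ∈ s, (X : ℤ⟦X⟧) ^ M ∣ f i - 1) : (X : ℤ⟦X⟧) ^ M ∣ (∏ i ∈ s, f i) - 1 := by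
  classical
  induction s using Finset.cons_induction with
  | empty => simp
  | cons a s ha ih =>
    rw [Finset.prod_cons]
    have he : f a * ∏ i ∈ s, f i - 1 = f a * ((∏ i ∈ s, f i) - 1) + (f a - 1) := by ring
    rw [he]
    exact dvd_add (Dvd.dvd.mul_left (ih fun i hi => h i (Finset.mem_cons_of_mem hi)) _)
      (h a (Finset.mem_cons_self a s))

lemma op_sub_op (a r : ℕ) {j n : ℕ} (h : j ≤ n) :
    (X : ℤ⟦X⟧) ^ (a + r * j) ∣ op a r n - op a r j := by
  have hsplit : op a r n = op a r j * ∏ i ∈ Ico j n, (1 - X ^ (a + r * i)) := by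
    rw [op, op, range_eq_Ico, range_eq_Ico]
    exact (Finset.prod_Ico_consecutive (fun i => (1 - (X : ℤ⟦X⟧) ^ (a + r * i))) (Nat.zero_le j) h).symm
  rw [hsplit]
  have : op a r j * (∏ i ∈ Ico j n, (1 - X ^ (a + r * i))) - op a r j
      = op a r j * ((∏ i ∈ Ico j n, (1 - X ^ (a + r * i))) - 1) := by ring
  rw [this]
  apply Dvd.dvd.mul_left
  apply dvd_prod_sub_one
  intro i hi
  rw [Finset.mem_Ico] at hi
  have : (1 : ℤ⟦X⟧) - X ^ (a + r * i) - 1 = -(X ^ (a + r * i)) := by ring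
  rw [this]
  exact (pow_dvd_pow _ (Nat.add_le_add_left (Nat.mul_le_mul_left _ hi.1) a)).neg_right

/-- Product formula: `gb r n k * (Q;Q)_k * (Q;Q)_{n-k} = (Q;Q)_n` with `Q = X^r`. -/
lemma gb_mul_op (r : ℕ) : ∀ n k : ℕ, k ≤ n →
    gb r n k * op r r k * op r r (n - k) = op r r n := by
  intro n
  induction n with
  | zero => intro k hk; interval_cases k; simp
  | succ n ih =>
    intro k hk
    cases k with
    | zero => simp
    | succ k =>
      rcases eq_or_lt_of_le hk with heq | hlt
      · have hkn : k = n := by omega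
        subst hkn
        simp
      · obtain ⟨m, rfl⟩ : ∃ m, n = m + (k+1) := ⟨n - (k+1), by omega⟩
        have h1 := gb_pascal1 r (m + (k+1)) k
        have ih1 := ih (k+1) (by omega)
        have ih2 := ih k (by omega)
        simp only [show m + (k+1) + 1 - (k+1) = m + 1 from by omega,
          show m + (k+1) - (k+1) = m from by omega,
          show m + (k+1) - k = m + 1 from by omega] at h1 ih1 ih2 ⊢
        have e2 : op r r (m+1) = op r r m * (1 - X ^ (r * (m+1))) := by
          rw [op_succ]; congr 2; ring
        have e3 : op r r (k+1) = op r r k * (1 - X ^ (r * (k+1))) := by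
          rw [op_succ]; congr 2; ring
        have e4 : op r r (m+(k+1)+1) = op r r (m+(k+1)) * (1 - X ^ (r * (m+(k+1)+1))) := by
          rw [op_succ]; congr 2; ring
        have hE : (X : ℤ⟦X⟧) ^ (r * (m+1)) * X ^ (r * (k+1)) = X ^ (r * (m+(k+1)+1)) := by
          rw [← pow_add]; congr 1; ring
        linear_combination (op r r (k+1) * op r r (m+1)) * h1
          + (1 - X^(r*(m+1))) * ih1
          + X^(r*(m+1)) * (1 - X^(r*(k+1))) * ih2
          + gb r (m+(k+1)) (k+1) * op r r (k+1) * e2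
          + X^(r*(m+1)) * gb r (m+(k+1)) k * op r r (m+1) * e3
          - e4
          - op r r (m+(k+1)) * hE

lemma dvd_of_dvd_unit_mul {u z a : ℤ⟦X⟧} (hu : IsUnit u) (h : a ∣ u * z) : a ∣ z := by
  obtain ⟨v, rfl⟩ := hu
  have h2 := h.mul_left (↑v⁻¹ : ℤ⟦X⟧)
  rwa [← mul_assoc, ← Units.val_mul, inv_mul_cancel, Units.val_one, one_mul] at h2

/-- Key congruence: `gb r n k * (Q;Q)_j ≡ 1 mod Q^(min k j (n-k) + 1)`. -/
lemma gb_op_cong (r : ℕ) {n k j : ℕ} (hr : 0 < r) (hk : k ≤ n) (hj : j ≤ n) :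
    (X : ℤ⟦X⟧) ^ (r * (min k (min j (n - k)) + 1)) ∣ gb r n k * op r r j - 1 := by
  set M := min k (min j (n - k)) with hM
  have h1 : (X:ℤ⟦X⟧) ^ (r * (k+1)) ∣ op r r n - op r r k := by
    have h := op_sub_op r (a := r) (j := k) (n := n) hk
    rwa [show r * (k+1) = r + r * k from by ring]
  have hP := gb_mul_op r n k hk
  have key : op r r k * (gb r n k * op r r (n-k) - 1) = op r r n - op r r k := by
    linear_combination hP
  have h2 : (X:ℤ⟦X⟧) ^ (r * (k+1)) ∣ op r r k * (gb r n k * op r r (n-k) - 1) := by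
    rw [key]; exact h1
  have h3 : (X:ℤ⟦X⟧) ^ (r * (k+1)) ∣ gb r n k * op r r (n-k) - 1 :=
    dvd_of_dvd_unit_mul (isUnit_op r r k hr) h2
  have h4 : (X:ℤ⟦X⟧) ^ (r * (min j (n-k) + 1)) ∣ op r r j - op r r (n-k) := by
    rcases le_total j (n-k) with hle | hle
    · have h := op_sub_op r (a := r) hle
      rw [show min j (n-k) = j from by omega, show r * (j+1) = r + r * j from by ring,
        show op r r j - op r r (n-k) = -(op r r (n-k) - op r r j) from by ring]
      exact dvd_neg.2 h
    · have h := op_sub_op r (a := r) hle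
      rwa [show min j (n-k) = n - k from by omega,
        show r * ((n-k)+1) = r + r * (n-k) from by ring]
  have e1 : gb r n k * op r r j - 1
      = (gb r n k * op r r (n-k) - 1) + gb r n k * (op r r j - op r r (n-k)) := by ring
  rw [e1]
  exact dvd_add (dvd_trans (pow_dvd_pow _ (Nat.mul_le_mul_left _ (by omega))) h3)
    (Dvd.dvd.mul_left (dvd_trans (pow_dvd_pow _ (Nat.mul_le_mul_left _ (by omega))) h4) _)


/-- `ℤ`-indexed Gaussian binomial. -/
noncomputable def gbz (r n : ℕ) (k : ℤ) : ℤ⟦X⟧ := if 0 ≤ k then gb r n k.toNat else 0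

lemma gbz_of_neg {r n : ℕ} {k : ℤ} (h : k < 0) : gbz r n k = 0 := if_neg (by omega)

lemma gbz_of_nonneg {r n : ℕ} {k : ℤ} (h : 0 ≤ k) : gbz r n k = gb r n k.toNat := if_pos h

lemma gbz_of_gt {r n : ℕ} {k : ℤ} (h : (n:ℤ) < k) : gbz r n k = 0 := by
  rw [gbz_of_nonneg (by omega)]
  exact gb_eq_zero (by omega)

@[simp] lemma gbz_zero_right (r n : ℕ) : gbz r n 0 = 1 := by
  rw [gbz_of_nonneg le_rfl]; simp

lemma gbz_pascal1 (r n : ℕ) (k : ℤ) :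
    gbz r (n+1) k = gbz r n k + X ^ (((r:ℤ) * ((n:ℤ)+1-k)).toNat) * gbz r n (k-1) := by
  rcases lt_or_ge k 0 with hk | hk
  · rw [gbz_of_neg hk, gbz_of_neg hk, gbz_of_neg (by omega), mul_zero, add_zero]
  rcases eq_or_lt_of_le hk with rfl | hk1
  · simp [gbz_of_neg]
  rcases le_or_gt k ((n:ℤ)+1) with hk2 | hk2
  · obtain ⟨k', rfl⟩ : ∃ k' : ℕ, k = (k' : ℤ) + 1 := ⟨(k-1).toNat, by omega⟩
    rw [gbz_of_nonneg hk, gbz_of_nonneg hk, gbz_of_nonneg (by omega)]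
    rw [show ((k':ℤ)+1).toNat = k' + 1 from by omega, show ((k':ℤ)+1-1).toNat = k' from by omega]
    rw [gb_pascal1]
    rw [show ((r:ℤ) * ((n:ℤ)+1-((k':ℤ)+1))).toNat = r * (n - k') from by
      rw [show (n:ℤ)+1-((k':ℤ)+1) = ((n - k' : ℕ) : ℤ) from by omega, ← Nat.cast_mul,
        Int.toNat_natCast]]
  · rw [gbz_of_gt (by push_cast; omega), gbz_of_gt (by omega), gbz_of_gt (by omega)]
    ring

lemma gbz_pascal2 (r n : ℕ) (k : ℤ) :
    gbz r (n+1) k = gbz r n (k-1) + X ^ (((r:ℤ) * k).toNat) * gbz r n k := by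
  rcases lt_or_ge k 0 with hk | hk
  · rw [gbz_of_neg hk, gbz_of_neg hk, gbz_of_neg (by omega), mul_zero, add_zero]
  rcases eq_or_lt_of_le hk with rfl | hk1
  · simp [gbz_of_neg]
  rcases le_or_gt k ((n:ℤ)+1) with hk2 | hk2
  · obtain ⟨k', rfl⟩ : ∃ k' : ℕ, k = (k' : ℤ) + 1 := ⟨(k-1).toNat, by omega⟩
    rw [gbz_of_nonneg hk, gbz_of_nonneg hk, gbz_of_nonneg (by omega)]
    rw [show ((k':ℤ)+1).toNat = k' + 1 from by omega, show ((k':ℤ)+1-1).toNat = k' from by omega]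
    rw [gb_pascal2]
    rw [show ((r:ℤ) * ((k':ℤ)+1)).toNat = r * (k'+1) from by
      rw [show (k':ℤ)+1 = ((k'+1 : ℕ) : ℤ) from by omega, ← Nat.cast_mul, Int.toNat_natCast]]
  · rw [gbz_of_gt (by push_cast; omega), gbz_of_gt (by omega), gbz_of_gt (by omega)]
    ring

/-- Double Pascal expansion going from `2n` to `2n+2`. -/
lemma gbz_double (r n : ℕ) (k : ℤ) :
    gbz r (2*n+2) k = (1 + X ^ (r * (2*n+1))) * gbz r (2*n) (k-1)
      + X ^ (((r:ℤ) * k).toNat) * gbz r (2*n) k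
      + X ^ (((r:ℤ) * (2*(n:ℤ)+2-k)).toNat) * gbz r (2*n) (k-2) := by
  have h1 := gbz_pascal1 r (2*n+1) k
  have h2 := gbz_pascal2 r (2*n) k
  have h3 := gbz_pascal2 r (2*n) (k-1)
  rw [show k-1-1 = k-2 from by ring] at h3
  rw [show 2*n+2 = (2*n+1)+1 from rfl, h1, h2, h3]
  have hbd : ((r:ℤ) * ((↑(2*n+1):ℤ)+1-k)).toNat = ((r:ℤ) * (2*(n:ℤ)+2-k)).toNat := by
    congr 1
    try push_cast
    try ring
  rw [hbd]
  rcases le_or_gt k 0 with hk | hk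
  · rw [gbz_of_neg (show k-1 < 0 by omega), gbz_of_neg (show k-2 < 0 by omega)]
    try ring
  rcases le_or_gt k (2*(n:ℤ)+1) with hk2 | hk2
  · obtain ⟨a, rfl⟩ : ∃ a : ℕ, k = (a:ℤ)+1 := ⟨(k-1).toNat, by omega⟩
    have ha : a ≤ 2*n := by omega
    have e1 : ((r:ℤ) * (2*(n:ℤ)+2-((a:ℤ)+1))).toNat = r * (2*n+1-a) := by
      rw [show 2*(n:ℤ)+2-((a:ℤ)+1) = ((2*n+1-a : ℕ) : ℤ) from by omega, ← Nat.cast_mul,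
        Int.toNat_natCast]
    have e2 : ((r:ℤ) * ((a:ℤ)+1-1)).toNat = r * a := by
      rw [show (a:ℤ)+1-1 = ((a:ℕ):ℤ) from by omega, ← Nat.cast_mul, Int.toNat_natCast]
    have hE : (X : ℤ⟦X⟧) ^ (r * (2*n+1-a)) * X ^ (r * a) = X ^ (r * (2*n+1)) := by
      rw [← pow_add, ← Nat.mul_add]
      congr 2
      omega
    rw [e1, e2]
    linear_combination (gbz r (2*n) ((a:ℤ)+1-1)) * hE
  · rw [gbz_of_gt (show (2*n:ℤ) < k-1 by omega), gbz_of_gt (show (2*n:ℤ) < k by omega)]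
    ring

noncomputable def sgn (m : ℤ) : ℤ⟦X⟧ := C (R := ℤ) (((-1 : ℤˣ) ^ m : ℤˣ) : ℤ)

lemma sgn_sub_one (m : ℤ) : sgn (m-1) = - sgn m := by
  unfold sgn
  rw [sub_eq_add_neg, zpow_add, zpow_neg, zpow_one, show ((-1:ℤˣ))⁻¹ = -1 from rfl,
    Units.val_mul]
  push_cast
  rw [map_mul]
  simp

lemma sgn_add_one (m : ℤ) : sgn (m+1) = - sgn m := by
  have := sgn_sub_one (m+1)
  rw [show m+1-1 = m from by ring] at this
  rw [← neg_neg (sgn (m+1)), ← this]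

@[simp] lemma sgn_zero : sgn 0 = 1 := by simp [sgn]

lemma S_step (r : ℕ) (e : ℤ → ℤ) (he : ∀ m, 0 ≤ e m) (N c1 c2 : ℕ)
    (h1 : ∀ i : ℤ, e (i-1) + r * ((N:ℤ) + i) = e i + c1)
    (h2 : ∀ i : ℤ, e (i+1) + r * ((N:ℤ) - i) = e i + c2)
    (hc : c1 + c2 = r * (2*N+1)) :
    (∑ m ∈ Icc (-((N:ℤ)+1)) ((N:ℤ)+1),
        sgn m * X ^ (e m).toNat * gbz r (2*(N+1)) ((N:ℤ)+1+m))
      = (1 - X ^ c1) * (1 - X ^ c2)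
        * ∑ m ∈ Icc (-(N:ℤ)) (N:ℤ), sgn m * X ^ (e m).toNat * gbz r (2*N) ((N:ℤ)+m) := by
  have key : ∀ m : ℤ, sgn m * X ^ (e m).toNat * gbz r (2*(N+1)) ((N:ℤ)+1+m)
      = (1 + X ^ (r*(2*N+1))) * (sgn m * X ^ (e m).toNat * gbz r (2*N) ((N:ℤ)+m))
        + sgn m * X ^ (e m).toNat * X ^ (((r:ℤ) * ((N:ℤ)+1+m)).toNat) * gbz r (2*N) ((N:ℤ)+1+m)
        + sgn m * X ^ (e m).toNat * X ^ (((r:ℤ) * ((N:ℤ)+1-m)).toNat) * gbz r (2*N) ((N:ℤ)+m-1) := by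
    intro m
    have h := gbz_double r N ((N:ℤ)+1+m)
    rw [show 2*(N+1) = 2*N+2 from by ring, h]
    rw [show (N:ℤ)+1+m-1 = (N:ℤ)+m from by ring, show (N:ℤ)+1+m-2 = (N:ℤ)+m-1 from by ring,
      show 2*(N:ℤ)+2-((N:ℤ)+1+m) = (N:ℤ)+1-m from by ring]
    ring
  rw [Finset.sum_congr rfl (fun m _ => key m), Finset.sum_add_distrib, Finset.sum_add_distrib]
  have hA : ∑ m ∈ Icc (-((N:ℤ)+1)) ((N:ℤ)+1),
      (1 + X ^ (r*(2*N+1))) * (sgn m * X ^ (e m).toNat * gbz r (2*N) ((N:ℤ)+m))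
      = (1 + X ^ (r*(2*N+1)))
        * ∑ m ∈ Icc (-(N:ℤ)) (N:ℤ), sgn m * X ^ (e m).toNat * gbz r (2*N) ((N:ℤ)+m) := by
    rw [← Finset.mul_sum]
    congr 1
    refine (Finset.sum_subset (Finset.Icc_subset_Icc (by omega) (by omega)) ?_).symm
    intro m hm1 hm0
    simp only [Finset.mem_Icc] at hm1 hm0
    have hcase : m = -((N:ℤ)+1) ∨ m = (N:ℤ)+1 := by omega
    rcases hcase with rfl | rfl
    · rw [gbz_of_neg (by omega), mul_zero]
    · rw [gbz_of_gt (by push_cast; omega), mul_zero]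
  have hB : ∑ m ∈ Icc (-((N:ℤ)+1)) ((N:ℤ)+1),
      sgn m * X ^ (e m).toNat * X ^ (((r:ℤ) * ((N:ℤ)+1+m)).toNat) * gbz r (2*N) ((N:ℤ)+1+m)
      = - X ^ c1
        * ∑ m ∈ Icc (-(N:ℤ)) (N:ℤ), sgn m * X ^ (e m).toNat * gbz r (2*N) ((N:ℤ)+m) := by
    rw [show Icc (-((N:ℤ)+1)) ((N:ℤ)+1)
        = (Icc (-(N:ℤ)) ((N:ℤ)+2)).map (addRightEmbedding (-1)) from by
      rw [Finset.map_add_right_Icc]; congr 1 <;> ring]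
    rw [Finset.sum_map, Finset.mul_sum]
    refine Finset.sum_congr ?_ ?_ |>.trans (Finset.sum_subset
      (show Icc (-(N:ℤ)) (N:ℤ) ⊆ Icc (-(N:ℤ)) ((N:ℤ)+2) from
        Finset.Icc_subset_Icc (by omega) (by omega)) ?_).symm
    · rfl
    · intro i hi
      simp only [Finset.mem_Icc] at hi
      simp only [addRightEmbedding_apply]
      rw [show i + -1 = i - 1 from by ring]
      rw [show (N:ℤ)+1+(i-1) = (N:ℤ)+i from by ring, sgn_sub_one]
      have hexp : (X : ℤ⟦X⟧) ^ ((e (i-1)).toNat) * X ^ (((r:ℤ) * ((N:ℤ)+i)).toNat)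
          = X ^ ((e i).toNat) * X ^ c1 := by
        rw [← pow_add, ← pow_add]
        congr 1
        have ha := he (i-1)
        have hb := he i
        have hc1 := h1 i
        have h0 : 0 ≤ (r:ℤ) * ((N:ℤ) + i) := mul_nonneg (by positivity) (by omega)
        omega
      calc - sgn i * X ^ (e (i-1)).toNat * X ^ (((r:ℤ) * ((N:ℤ)+i)).toNat) * gbz r (2*N) ((N:ℤ)+i)
          = - sgn i * (X ^ ((e (i-1)).toNat) * X ^ (((r:ℤ) * ((N:ℤ)+i)).toNat))
            * gbz r (2*N) ((N:ℤ)+i) := by ring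
        _ = - sgn i * (X ^ ((e i).toNat) * X ^ c1) * gbz r (2*N) ((N:ℤ)+i) := by rw [hexp]
        _ = - X ^ c1 * (sgn i * X ^ (e i).toNat * gbz r (2*N) ((N:ℤ)+i)) := by ring
    · intro i hi1 hi0
      simp only [Finset.mem_Icc] at hi1 hi0
      have hcase : i = (N:ℤ)+1 ∨ i = (N:ℤ)+2 := by omega
      have hz : gbz r (2*N) ((N:ℤ)+i) = 0 := by
        rcases hcase with rfl | rfl <;> exact gbz_of_gt (by push_cast; omega)
      rw [hz, mul_zero, mul_zero]
  have hC : ∑ m ∈ Icc (-((N:ℤ)+1)) ((N:ℤ)+1),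
      sgn m * X ^ (e m).toNat * X ^ (((r:ℤ) * ((N:ℤ)+1-m)).toNat) * gbz r (2*N) ((N:ℤ)+m-1)
      = - X ^ c2
        * ∑ m ∈ Icc (-(N:ℤ)) (N:ℤ), sgn m * X ^ (e m).toNat * gbz r (2*N) ((N:ℤ)+m) := by
    rw [show Icc (-((N:ℤ)+1)) ((N:ℤ)+1)
        = (Icc (-(N:ℤ)-2) ((N:ℤ))).map (addRightEmbedding 1) from by
      rw [Finset.map_add_right_Icc]; congr 1 <;> ring]
    rw [Finset.sum_map, Finset.mul_sum]
    refine Finset.sum_congr ?_ ?_ |>.trans (Finset.sum_subset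
      (show Icc (-(N:ℤ)) (N:ℤ) ⊆ Icc (-(N:ℤ)-2) (N:ℤ) from
        Finset.Icc_subset_Icc (by omega) (by omega)) ?_).symm
    · rfl
    · intro i hi
      simp only [Finset.mem_Icc] at hi
      simp only [addRightEmbedding_apply]
      rw [show (N:ℤ)+1-(i+1) = (N:ℤ)-i from by ring, sgn_add_one]
      rw [show (N:ℤ)+(i+1)-1 = (N:ℤ)+i from by ring]
      have hexp : (X : ℤ⟦X⟧) ^ ((e (i+1)).toNat) * X ^ (((r:ℤ) * ((N:ℤ)-i)).toNat)
          = X ^ ((e i).toNat) * X ^ c2 := by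
        rw [← pow_add, ← pow_add]
        congr 1
        have ha := he (i+1)
        have hb := he i
        have hc2 := h2 i
        have h0 : 0 ≤ (r:ℤ) * ((N:ℤ) - i) := mul_nonneg (by positivity) (by omega)
        omega
      calc - sgn i * X ^ (e (i+1)).toNat * X ^ (((r:ℤ) * ((N:ℤ)-i)).toNat) * gbz r (2*N) ((N:ℤ)+i)
          = - sgn i * (X ^ ((e (i+1)).toNat) * X ^ (((r:ℤ) * ((N:ℤ)-i)).toNat))
            * gbz r (2*N) ((N:ℤ)+i) := by ring
        _ = - sgn i * (X ^ ((e i).toNat) * X ^ c2) * gbz r (2*N) ((N:ℤ)+i) := by rw [hexp]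
        _ = - X ^ c2 * (sgn i * X ^ (e i).toNat * gbz r (2*N) ((N:ℤ)+i)) := by ring
    · intro i hi1 hi0
      simp only [Finset.mem_Icc] at hi1 hi0
      have hcase : i = -(N:ℤ)-1 ∨ i = -(N:ℤ)-2 := by omega
      have hz : gbz r (2*N) ((N:ℤ)+i) = 0 := by
        rcases hcase with rfl | rfl <;> exact gbz_of_neg (by omega)
      rw [hz, mul_zero, mul_zero]
  rw [hA, hB, hC]
  rw [show r * (2*N+1) = c1 + c2 from hc.symm, pow_add]
  ring


lemma Sphi_eq (N : ℕ) :
    (∑ m ∈ Icc (-(N:ℤ)) (N:ℤ), sgn m * X ^ ((m^2 : ℤ)).toNat * gbz 2 (2*N) ((N:ℤ)+m))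
      = (op 1 2 N)^2 := by
  induction N with
  | zero => simp [op]
  | succ N ih =>
    have step := S_step 2 (fun m => m^2) (fun m => sq_nonneg m) N (2*N+1) (2*N+1)
      (fun i => by push_cast; ring) (fun i => by push_cast; ring) (by ring)
    rw [ih] at step
    have hb : (-(((N:ℕ)+1 : ℕ) : ℤ)) = -((N:ℤ)+1) := by push_cast; ring
    have hb2 : ((((N:ℕ)+1 : ℕ)) : ℤ) = (N:ℤ)+1 := by push_cast; ring
    calc (∑ m ∈ Icc (-(((N+1:ℕ)):ℤ)) (((N+1:ℕ)):ℤ),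
            sgn m * X ^ ((m^2 : ℤ)).toNat * gbz 2 (2*(N+1)) ((((N+1:ℕ)):ℤ)+m))
        = ∑ m ∈ Icc (-((N:ℤ)+1)) ((N:ℤ)+1),
            sgn m * X ^ ((m^2 : ℤ)).toNat * gbz 2 (2*(N+1)) ((N:ℤ)+1+m) := by
          rw [hb, hb2]
      _ = (1 - X ^ (2*N+1)) * (1 - X ^ (2*N+1)) * (op 1 2 N)^2 := step
      _ = (op 1 2 (N+1))^2 := by
          rw [op_succ, show 1 + 2*N = 2*N+1 from by ring]
          ring

lemma Spsi_eq (N : ℕ) :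
    (∑ m ∈ Icc (-(N:ℤ)) (N:ℤ), sgn m * X ^ ((2*m^2 - m : ℤ)).toNat * gbz 4 (2*N) ((N:ℤ)+m))
      = op 1 2 (2*N) := by
  have he : ∀ m : ℤ, 0 ≤ 2*m^2 - m := by
    intro m
    rcases le_or_gt m 0 with h | h
    · nlinarith [sq_nonneg m]
    · nlinarith [sq_nonneg m]
  induction N with
  | zero => simp [op]
  | succ N ih =>
    have step := S_step 4 (fun m => 2*m^2 - m) he N (4*N+3) (4*N+1)
      (fun i => by push_cast; ring) (fun i => by push_cast; ring) (by ring)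
    rw [ih] at step
    have hb : (-(((N:ℕ)+1 : ℕ) : ℤ)) = -((N:ℤ)+1) := by push_cast; ring
    have hb2 : ((((N:ℕ)+1 : ℕ)) : ℤ) = (N:ℤ)+1 := by push_cast; ring
    calc (∑ m ∈ Icc (-(((N+1:ℕ)):ℤ)) (((N+1:ℕ)):ℤ),
            sgn m * X ^ ((2*m^2 - m : ℤ)).toNat * gbz 4 (2*(N+1)) ((((N+1:ℕ)):ℤ)+m))
        = ∑ m ∈ Icc (-((N:ℤ)+1)) ((N:ℤ)+1),
            sgn m * X ^ ((2*m^2 - m : ℤ)).toNat * gbz 4 (2*(N+1)) ((N:ℤ)+1+m) := by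
          rw [hb, hb2]
      _ = (1 - X ^ (4*N+3)) * (1 - X ^ (4*N+1)) * op 1 2 (2*N) := step
      _ = op 1 2 (2*(N+1)) := by
          rw [show 2*(N+1) = (2*N+1)+1 from by ring, op_succ, op_succ,
            show 1 + 2*(2*N) = 4*N+1 from by ring, show 1 + 2*(2*N+1) = 4*N+3 from by ring]
          ring

lemma claimA (N : ℕ) : (X:ℤ⟦X⟧)^(2*N+1) ∣
    (∑ m ∈ Icc (-(N:ℤ)) (N:ℤ), sgn m * X ^ ((m^2 : ℤ)).toNat) - (op 1 2 N)^2 * op 2 2 N := by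
  rw [← Sphi_eq, Finset.sum_mul, ← Finset.sum_sub_distrib]
  apply Finset.dvd_sum
  intro m hm
  simp only [Finset.mem_Icc] at hm
  have hk0 : (0:ℤ) ≤ (N:ℤ) + m := by omega
  rw [gbz_of_nonneg hk0]
  set k := ((N:ℤ)+m).toNat with hkdef
  have hkn : k ≤ 2*N := by omega
  have hcong := gb_op_cong 2 (n := 2*N) (k := k) (j := N) (by omega) hkn (by omega)
  have hterm : sgn m * X ^ ((m^2 : ℤ)).toNat
        - sgn m * X ^ ((m^2 : ℤ)).toNat * gb 2 (2*N) k * op 2 2 N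
      = - (sgn m) * (X ^ ((m^2 : ℤ)).toNat * (gb 2 (2*N) k * op 2 2 N - 1)) := by ring
  rw [hterm]
  apply Dvd.dvd.mul_left
  have hdd := mul_dvd_mul (dvd_refl ((X:ℤ⟦X⟧) ^ ((m^2:ℤ)).toNat)) hcong
  rw [← pow_add] at hdd
  refine dvd_trans (pow_dvd_pow _ ?_) hdd
  have f1 : (0:ℤ) ≤ m^2 - 2*m + 1 := by nlinarith [sq_nonneg (m-1)]
  have f2 : (0:ℤ) ≤ m^2 + 2*m + 1 := by nlinarith [sq_nonneg (m+1)]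
  have f3 : (0:ℤ) ≤ m^2 := sq_nonneg m
  rw [hkdef]
  generalize m^2 = s at f1 f2 f3 ⊢
  omega

lemma claimB (N : ℕ) : (X:ℤ⟦X⟧)^(4*N+1) ∣
    (∑ m ∈ Icc (-(N:ℤ)) (N:ℤ), sgn m * X ^ ((2*m^2 - m : ℤ)).toNat)
      - op 1 2 (2*N) * op 4 4 N := by
  rw [← Spsi_eq, Finset.sum_mul, ← Finset.sum_sub_distrib]
  apply Finset.dvd_sum
  intro m hm
  simp only [Finset.mem_Icc] at hm
  have hk0 : (0:ℤ) ≤ (N:ℤ) + m := by omega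
  rw [gbz_of_nonneg hk0]
  set k := ((N:ℤ)+m).toNat with hkdef
  have hkn : k ≤ 2*N := by omega
  have hcong := gb_op_cong 4 (n := 2*N) (k := k) (j := N) (by omega) hkn (by omega)
  have hterm : sgn m * X ^ ((2*m^2 - m : ℤ)).toNat
        - sgn m * X ^ ((2*m^2 - m : ℤ)).toNat * gb 4 (2*N) k * op 4 4 N
      = - (sgn m) * (X ^ ((2*m^2 - m : ℤ)).toNat * (gb 4 (2*N) k * op 4 4 N - 1)) := by ring
  rw [hterm]
  apply Dvd.dvd.mul_left
  have hdd := mul_dvd_mul (dvd_refl ((X:ℤ⟦X⟧) ^ ((2*m^2 - m:ℤ)).toNat)) hcong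
  rw [← pow_add] at hdd
  refine dvd_trans (pow_dvd_pow _ ?_) hdd
  have f1 : (0:ℤ) ≤ 2*m^2 - 5*m + 3 := by
    rcases le_or_gt m 1 with h | h
    · nlinarith
    · nlinarith
  have f2 : (0:ℤ) ≤ 2*m^2 + 3*m + 3 := by
    rcases le_or_gt m (-1) with h | h
    · nlinarith
    · nlinarith
  have f3 : (0:ℤ) ≤ m^2 := sq_nonneg m
  rw [hkdef]
  generalize m^2 = s at f1 f2 f3 ⊢
  omega

lemma op_split (N : ℕ) : op 2 4 N * op 4 4 N = op 2 2 (2*N) := by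
  induction N with
  | zero => simp
  | succ N ih =>
    rw [op_succ, op_succ, show 2*(N+1) = (2*N+1)+1 from by ring, op_succ, op_succ, ← ih]
    rw [show 2 + 2*(2*N) = 2 + 4*N from by ring, show 2 + 2*(2*N+1) = 4 + 4*N from by ring]
    ring

lemma claimC (N : ℕ) : (X:ℤ⟦X⟧)^(2*N+1) ∣
    (op 1 2 N * op 2 4 N) * (op 1 2 (2*N) * op 4 4 N) - (op 1 2 N)^2 * op 2 2 N := by
  have hd1 : (X:ℤ⟦X⟧)^(2*N+1) ∣ op 1 2 (2*N) - op 1 2 N := by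
    have h := op_sub_op 1 2 (show N ≤ 2*N by omega)
    rwa [show 2*N+1 = 1 + 2*N from by ring]
  have hd3 : (X:ℤ⟦X⟧)^(2*N+1) ∣ op 2 2 (2*N) - op 2 2 N := by
    have h := op_sub_op 2 2 (show N ≤ 2*N by omega)
    exact dvd_trans (pow_dvd_pow _ (by omega)) h
  have hkey : (op 1 2 N * op 2 4 N) * (op 1 2 (2*N) * op 4 4 N) - (op 1 2 N)^2 * op 2 2 N
      = op 1 2 N * (op 1 2 N * (op 2 2 (2*N) - op 2 2 N)
          + (op 1 2 (2*N) - op 1 2 N) * op 2 2 (2*N)) := by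
    rw [show (op 1 2 N * op 2 4 N) * (op 1 2 (2*N) * op 4 4 N)
        = op 1 2 N * op 1 2 (2*N) * (op 2 4 N * op 4 4 N) from by ring, op_split]
    ring
  rw [hkey]
  exact (dvd_add (hd3.mul_left _) (hd1.mul_right _)).mul_left _



lemma coeff_apply' (ξ : ℤ⟦X⟧) (n : ℕ) : coeff (R := ℤ) n ξ = ξ (Finsupp.single () n) := rfl

lemma tendsto_coeffwise {ι : Type*} (g : Finset ι → ℤ⟦X⟧) (P : ℤ⟦X⟧)
    (h : ∀ d : ℕ, ∃ s₀ : Finset ι, ∀ s : Finset ι, s₀ ⊆ s →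
      (coeff (R := ℤ) d) (g s) = (coeff (R := ℤ) d) P) :
    Filter.Tendsto g Filter.atTop (nhds P) := by
  have key : Filter.Tendsto (g : Finset ι → ((Unit →₀ ℕ) → ℤ)) Filter.atTop
      (@nhds ((Unit →₀ ℕ) → ℤ) _ (P : (Unit →₀ ℕ) → ℤ)) := by
    apply tendsto_pi_nhds.2
    intro d
    obtain ⟨s₀, hs⟩ := h (d ())
    apply tendsto_nhds_of_eventually_eq
    filter_upwards [Filter.eventually_ge_atTop s₀] with s hs'
    have hd : d = Finsupp.single () (d ()) := Finsupp.unique_single d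
    have hc := hs s hs'
    rw [coeff_apply', coeff_apply'] at hc
    rw [hd]
    exact hc
  exact key

lemma X_dvd_sub_iff {a b : ℤ⟦X⟧} {M : ℕ} :
    (X:ℤ⟦X⟧)^M ∣ a - b ↔ ∀ j < M, coeff (R := ℤ) j a = coeff (R := ℤ) j b := by
  rw [X_pow_dvd_iff]
  constructor
  · intro h j hj
    have := h j hj
    rw [map_sub, sub_eq_zero] at this
    exact this
  · intro h j hj
    rw [map_sub, h j hj, sub_self]

/-- the generating-function factors -/
noncomputable abbrev fL (k : ℕ) : ℤ⟦X⟧ := (1 - X ^ (2*k+1)) * (1 - X ^ (4*k+2))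

lemma prod_coeff_stable (d : ℕ) {s : Finset ℕ} (hs : range (d+1) ⊆ s) :
    coeff (R := ℤ) d (∏ k ∈ s, fL k) = coeff (R := ℤ) d (∏ k ∈ range (d+1), fL k) := by
  rw [← Finset.prod_sdiff hs]
  have hdvd : (X:ℤ⟦X⟧)^(d+1) ∣ (∏ k ∈ s \ range (d+1), fL k) - 1 := by
    apply dvd_prod_sub_one
    intro i hi
    rw [Finset.mem_sdiff, Finset.mem_range] at hi
    have hi1 : d + 1 ≤ i + 1 := by omega
    have he : fL i - 1 = -(X^(2*i+1)) - X^(4*i+2) + X^(2*i+1) * X^(4*i+2) := by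
      unfold fL; ring
    rw [he]
    refine dvd_add (dvd_sub ?_ ?_) ?_
    · exact (pow_dvd_pow _ (by omega)).neg_right
    · exact pow_dvd_pow _ (by omega)
    · exact (pow_dvd_pow _ (by omega)).mul_right _
  have h2 : (X:ℤ⟦X⟧)^(d+1) ∣ (∏ k ∈ s \ range (d+1), fL k) * (∏ k ∈ range (d+1), fL k)
      - ∏ k ∈ range (d+1), fL k := by
    have := hdvd.mul_right (∏ k ∈ range (d+1), fL k)
    rwa [sub_mul, one_mul] at this
  exact X_dvd_sub_iff.1 h2 d (by omega)

noncomputable def LP : ℤ⟦X⟧ := PowerSeries.mk fun d => coeff (R := ℤ) d (∏ k ∈ range (d+1), fL k)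

lemma hasProd_L : HasProd fL LP := by
  apply tendsto_coeffwise
  intro d
  exact ⟨range (d+1), fun s hs => by rw [LP, coeff_mk]; exact prod_coeff_stable d hs⟩

lemma coeff_tprod (j : ℕ) {N : ℕ} (hN : j + 1 ≤ N) :
    coeff (R := ℤ) j (∏' k, fL k) = coeff (R := ℤ) j (∏ k ∈ range N, fL k) := by
  rw [hasProd_L.tprod_eq, LP, coeff_mk]
  exact (prod_coeff_stable j (by intro x hx; rw [Finset.mem_range] at hx ⊢; omega)).symm

lemma sum_coeff_stable {ι : Type*} (f : ι → ℤ⟦X⟧) (d : ℕ) {s₀ s : Finset ι} (hs : s₀ ⊆ s)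
    (hz : ∀ i ∈ s, i ∉ s₀ → (X:ℤ⟦X⟧)^(d+1) ∣ f i) :
    coeff (R := ℤ) d (∑ i ∈ s, f i) = coeff (R := ℤ) d (∑ i ∈ s₀, f i) := by
  classical
  rw [← Finset.sum_sdiff hs, map_add]
  have hzero : coeff (R := ℤ) d (∑ i ∈ s \ s₀, f i) = 0 := by
    rw [map_sum]
    apply Finset.sum_eq_zero
    intro i hi
    rw [Finset.mem_sdiff] at hi
    exact X_pow_dvd_iff.1 (hz i hi.1 hi.2) d (by omega)
  rw [hzero, zero_add]

/-- summands of ψ -/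
noncomputable abbrev gPsi (n : ℕ) : ℤ⟦X⟧ := (-1 : ℤ⟦X⟧) ^ (n * (n + 1) / 2) * X ^ (n * (n + 1) / 2)

lemma tri_ge (n : ℕ) : n ≤ n * (n + 1) / 2 := by
  rw [Nat.le_div_iff_mul_le (by norm_num)]
  rcases Nat.eq_zero_or_pos n with rfl | h
  · simp
  · exact Nat.mul_le_mul_left n (by omega)

lemma psi_stable (d : ℕ) {s : Finset ℕ} (hs : range (d+1) ⊆ s) :
    coeff (R := ℤ) d (∑ n ∈ s, gPsi n) = coeff (R := ℤ) d (∑ n ∈ range (d+1), gPsi n) := by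
  apply sum_coeff_stable _ d hs
  intro i hi hi0
  rw [Finset.mem_range] at hi0
  have : d + 1 ≤ i * (i+1) / 2 := le_trans (by omega) (tri_ge i)
  exact ((pow_dvd_pow (X:ℤ⟦X⟧) this)).mul_left _

noncomputable def PsiP : ℤ⟦X⟧ := PowerSeries.mk fun d => coeff (R := ℤ) d (∑ n ∈ range (d+1), gPsi n)

lemma hasSum_psi : HasSum gPsi PsiP := by
  apply tendsto_coeffwise
  intro d
  exact ⟨range (d+1), fun s hs => by rw [PsiP, coeff_mk]; exact psi_stable d hs⟩

lemma psiNeg_eq : psiNeg = PsiP := hasSum_psi.tsum_eq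

lemma coeff_psi (j : ℕ) {N : ℕ} (hN : j + 1 ≤ N) :
    coeff (R := ℤ) j psiNeg = coeff (R := ℤ) j (∑ n ∈ range N, gPsi n) := by
  rw [psiNeg_eq, PsiP, coeff_mk]
  exact (psi_stable j (by intro x hx; rw [Finset.mem_range] at hx ⊢; omega)).symm

/-- summands of φ -/
noncomputable abbrev gPhi (n : ℤ) : ℤ⟦X⟧ := sgn n * X ^ ((n^2 : ℤ)).toNat

lemma phi_stable (d : ℕ) {s : Finset ℤ} (hs : Icc (-(d:ℤ)) (d:ℤ) ⊆ s) :
    coeff (R := ℤ) d (∑ n ∈ s, gPhi n) = coeff (R := ℤ) d (∑ n ∈ Icc (-(d:ℤ)) (d:ℤ), gPhi n) := by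
  apply sum_coeff_stable _ d hs
  intro i hi hi0
  rw [Finset.mem_Icc] at hi0
  have h2 : (d:ℤ) + 1 ≤ i^2 := by
    rcases (by omega : i < -(d:ℤ) ∨ (d:ℤ) < i) with h | h
    · nlinarith
    · nlinarith
  have h3 : d + 1 ≤ ((i^2 : ℤ)).toNat := by omega
  exact ((pow_dvd_pow (X:ℤ⟦X⟧) h3)).mul_left _

noncomputable def PhiP : ℤ⟦X⟧ := PowerSeries.mk fun d => coeff (R := ℤ) d (∑ n ∈ Icc (-(d:ℤ)) (d:ℤ), gPhi n)

lemma hasSum_phi : HasSum gPhi PhiP := by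
  apply tendsto_coeffwise
  intro d
  exact ⟨Icc (-(d:ℤ)) (d:ℤ), fun s hs => by rw [PhiP, coeff_mk]; exact phi_stable d hs⟩

lemma phiNeg_eq : phiNeg = PhiP := by
  have : phiNeg = ∑' n : ℤ, gPhi n := rfl
  rw [this, hasSum_phi.tsum_eq]

lemma coeff_phi (j : ℕ) {N : ℕ} (hN : j ≤ N) :
    coeff (R := ℤ) j phiNeg = coeff (R := ℤ) j (∑ n ∈ Icc (-(N:ℤ)) (N:ℤ), gPhi n) := by
  rw [phiNeg_eq, PhiP, coeff_mk]
  refine (phi_stable j ?_).symm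
  intro x hx
  simp only [Finset.mem_Icc] at *
  omega

lemma sgn_coe (a : ℕ) : sgn (a:ℤ) = (-1:ℤ⟦X⟧)^a := by
  unfold sgn
  rw [zpow_natCast, Units.val_pow_eq_pow_val, Units.val_neg, Units.val_one, map_pow, map_neg,
    map_one]

lemma sgn_neg (m : ℤ) : sgn (-m) = sgn m := by
  unfold sgn
  rw [zpow_neg, ← inv_zpow, show ((-1:ℤˣ))⁻¹ = -1 from rfl]

/-- The one-sided ψ-sum equals the two-sided theta sum. -/
lemma psi_two_sided (M : ℕ) : ∑ n ∈ range (2*M+1), gPsi n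
    = ∑ m ∈ Icc (-(M:ℤ)) (M:ℤ), sgn m * X ^ ((2*m^2 - m : ℤ)).toNat := by
  refine Finset.sum_nbij' (i := fun n => if n % 2 = 0 then -((n/2 : ℕ) : ℤ) else ((n/2 : ℕ) : ℤ) + 1)
    (j := fun m => if 0 < m then 2*m.toNat - 1 else 2*(-m).toNat) ?_ ?_ ?_ ?_ ?_
  · intro n hn
    rw [Finset.mem_range] at hn
    rw [Finset.mem_Icc]
    split_ifs <;> omega
  · intro m hm
    rw [Finset.mem_Icc] at hm
    rw [Finset.mem_range]
    split_ifs <;> omega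
  · intro n hn
    rw [Finset.mem_range] at hn
    split_ifs <;> omega
  · intro m hm
    rw [Finset.mem_Icc] at hm
    split_ifs <;> omega
  · intro n hn
    rcases Nat.even_or_odd n with he | ho
    · obtain ⟨a, rfl⟩ : ∃ a, n = 2*a := ⟨n/2, by have := Nat.even_iff.1 he; omega⟩
      rw [if_pos (by omega)]
      simp only [gPsi]
      have hT : 2*a*(2*a+1)/2 = 2*a^2+a := by
        rw [show 2*a*(2*a+1) = 2*(2*a^2+a) from by ring, Nat.mul_div_cancel_left _ (by norm_num)]
      have hd2 : (2*a)/2 = a := by omega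
      rw [hd2, hT]
      have hexp : ((2*(-(a:ℤ))^2 - (-(a:ℤ))) : ℤ).toNat = 2*a^2+a := by
        rw [show (2*(-(a:ℤ))^2 - (-(a:ℤ))) = ((2*a^2+a : ℕ) : ℤ) from by push_cast; ring,
          Int.toNat_natCast]
      rw [sgn_neg, sgn_coe, hexp]
      rw [show 2*a^2+a = 2*(a^2)+a from by ring, pow_add, pow_mul]
      norm_num
    · obtain ⟨a, rfl⟩ : ∃ a, n = 2*a+1 := ⟨n/2, by have := Nat.odd_iff.1 ho; omega⟩
      rw [if_neg (by omega)]
      simp only [gPsi]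
      have hT : (2*a+1)*(2*a+1+1)/2 = 2*a^2+3*a+1 := by
        rw [show (2*a+1)*(2*a+1+1) = 2*(2*a^2+3*a+1) from by ring,
          Nat.mul_div_cancel_left _ (by norm_num)]
      have hd2 : (2*a+1)/2 = a := by omega
      rw [hd2, hT]
      have hexp : ((2*((a:ℤ)+1)^2 - ((a:ℤ)+1)) : ℤ).toNat = 2*a^2+3*a+1 := by
        rw [show (2*((a:ℤ)+1)^2 - ((a:ℤ)+1)) = ((2*a^2+3*a+1 : ℕ) : ℤ) from by push_cast; ring,
          Int.toNat_natCast]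
      rw [show ((a:ℤ)) + 1 = ((a+1 : ℕ) : ℤ) from by push_cast; ring, sgn_coe]
      rw [show (2*((a:ℤ)+1)^2 - ((a:ℤ)+1) : ℤ) = (2*(((a:ℕ)+1 : ℕ):ℤ)^2 - (((a:ℕ)+1 : ℕ):ℤ) : ℤ) from by push_cast; ring] at hexp
      rw [hexp]
      rw [show 2*a^2+3*a+1 = 2*(a^2+a)+(a+1) from by ring, pow_add, pow_mul]
      norm_num

lemma main_dvd (d : ℕ) : coeff (R := ℤ) d ((∏' k, fL k) * psiNeg) = coeff (R := ℤ) d phiNeg := by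
  set N := d + 1 with hN
  have prod_split : ∏ k ∈ range N, fL k = op 1 2 N * op 2 4 N := by
    unfold fL op
    rw [← Finset.prod_mul_distrib]
    apply Finset.prod_congr rfl
    intro k _
    congr 2 <;> ring
  have ha : (X:ℤ⟦X⟧)^(d+1) ∣ (∏' k, fL k) - op 1 2 N * op 2 4 N := by
    rw [← prod_split]
    exact X_dvd_sub_iff.2 fun j hj => coeff_tprod j (by omega)
  have hb : (X:ℤ⟦X⟧)^(d+1) ∣ psiNeg - op 1 2 (2*N) * op 4 4 N := by
    have h1 : (X:ℤ⟦X⟧)^(d+1) ∣ psiNeg - ∑ n ∈ range (2*N+1), gPsi n :=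
      X_dvd_sub_iff.2 fun j hj => coeff_psi j (by omega)
    have h2 := claimB N
    rw [← psi_two_sided N] at h2
    have h2' : (X:ℤ⟦X⟧)^(d+1) ∣ (∑ n ∈ range (2*N+1), gPsi n) - op 1 2 (2*N) * op 4 4 N :=
      dvd_trans (pow_dvd_pow _ (by omega)) h2
    have := dvd_add h1 h2'
    rwa [sub_add_sub_cancel] at this
  have hc : (X:ℤ⟦X⟧)^(d+1) ∣ phiNeg - (op 1 2 N)^2 * op 2 2 N := by
    have h1 : (X:ℤ⟦X⟧)^(d+1) ∣ phiNeg - ∑ n ∈ Icc (-(N:ℤ)) (N:ℤ), gPhi n :=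
      X_dvd_sub_iff.2 fun j hj => coeff_phi j (by omega)
    have h2 := claimA N
    have h2' : (X:ℤ⟦X⟧)^(d+1) ∣ (∑ n ∈ Icc (-(N:ℤ)) (N:ℤ), gPhi n) - (op 1 2 N)^2 * op 2 2 N :=
      dvd_trans (pow_dvd_pow _ (by omega)) h2
    have := dvd_add h1 h2'
    rwa [sub_add_sub_cancel] at this
  have hd' := claimC N
  have hd'' : (X:ℤ⟦X⟧)^(d+1) ∣ (op 1 2 N * op 2 4 N) * (op 1 2 (2*N) * op 4 4 N)
      - (op 1 2 N)^2 * op 2 2 N := dvd_trans (pow_dvd_pow _ (by omega)) hd'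
  have key : (X:ℤ⟦X⟧)^(d+1) ∣ (∏' k, fL k) * psiNeg - phiNeg := by
    have hsum : (∏' k, fL k) * psiNeg - phiNeg
        = ((∏' k, fL k) - op 1 2 N * op 2 4 N) * psiNeg
          + (op 1 2 N * op 2 4 N) * (psiNeg - op 1 2 (2*N) * op 4 4 N)
          + ((op 1 2 N * op 2 4 N) * (op 1 2 (2*N) * op 4 4 N) - (op 1 2 N)^2 * op 2 2 N)
          + - (phiNeg - (op 1 2 N)^2 * op 2 2 N) := by ring
    rw [hsum]
    exact dvd_add (dvd_add (dvd_add (ha.mul_right _) (hb.mul_left _)) hd'') hc.neg_right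
  have := X_dvd_sub_iff.1 key d (by omega)
  exact this

lemma main : (∏' k, fL k) * psiNeg = phiNeg :=
  PowerSeries.ext fun d => main_dvd d

lemma psi_unit : IsUnit psiNeg := by
  rw [isUnit_iff_constantCoeff]
  have h0 : constantCoeff (R := ℤ) psiNeg = coeff (R := ℤ) 0 psiNeg := by
    rw [coeff_zero_eq_constantCoeff]
  rw [h0, coeff_psi 0 (le_refl 1)]
  simp [gPsi]

end JTP

theorem genFun_eq_phiNeg_div_psiNeg :
    (∏' k : ℕ, ((1 - (X : ℤ⟦X⟧) ^ (2 * k + 1)) * (1 - (X : ℤ⟦X⟧) ^ (4 * k + 2))))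
      = phiNeg * Ring.inverse psiNeg := by
  have hm := JTP.main
  calc (∏' k : ℕ, ((1 - (X : ℤ⟦X⟧) ^ (2 * k + 1)) * (1 - (X : ℤ⟦X⟧) ^ (4 * k + 2))))
      = (∏' k, JTP.fL k) * (psiNeg * Ring.inverse psiNeg) := by
        rw [Ring.mul_inverse_cancel _ JTP.psi_unit, mul_one]
    _ = ((∏' k, JTP.fL k) * psiNeg) * Ring.inverse psiNeg := by ring
    _ = phiNeg * Ring.inverse psiNeg := by rw [hm]
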